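/- Let r, R > 0 with 2r ≤ R. Let ω be an (r,R)-set in ℝ^d and S > 0 be arbitrary. Then there exists a crystallographic (r,R)-set ρ in ℝ^d with ρ ∩ Q(S) = ω ∩ Q(S), where Q(S) = [−S,S]^d. -/

import Mathlib

open scoped Pointwise

/-- `ω ⊆ ℝ^d` is an `(r,R)`-set: the open balls of radius `r` around distinct points of `ω`
are disjoint, and the closed balls of radius `R` around the points of `ω` cover `ℝ^d`. -/
def IsRRSet {d : ℕ} (r R : ℝ) (ω : Set (EuclideanSpace ℝ (Fin d))) : Prop :=
  (∀ x ∈ ω, ∀ y ∈ ω, x ≠ y → Disjoint (Metric.ball x r) (Metric.ball y r)) ∧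
  (⋃ x ∈ ω, Metric.closedBall x R) = Set.univ

/-- A Delone set: an `(r,R)`-set for some `0 < r ≤ R`. -/
def IsDelone {d : ℕ} (ω : Set (EuclideanSpace ℝ (Fin d))) : Prop :=
  ∃ r R : ℝ, 0 < r ∧ r ≤ R ∧ IsRRSet r R ω

/-- A Delone set `ρ` is crystallographic if its period group
`Per(ρ) = {t : t + ρ = ρ}` is a lattice, i.e. a discrete cocompact subgroup of `ℝ^d`. -/
def IsCrystallographic {d : ℕ} (ρ : Set (EuclideanSpace ℝ (Fin d))) : Prop :=
  ∃ L : AddSubgroup (EuclideanSpace ℝ (Fin d)),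
    (L : Set (EuclideanSpace ℝ (Fin d))) = {t | t +ᵥ ρ = ρ} ∧
    DiscreteTopology L ∧ CompactSpace (EuclideanSpace ℝ (Fin d) ⧸ L)

/-- The cube `Q(S) = [-S, S]^d` in `ℝ^d`. -/
def cube (d : ℕ) (S : ℝ) : Set (EuclideanSpace ℝ (Fin d)) :=
  {x | ∀ i, x i ∈ Set.Icc (-S) S}

/-!
Put `T = S + R + r` and `Λ = (2Tℤ)^d`. Since `2(S + R) + 2r ≤ 2T`, the points of `ω` in
`Q(S + R)` stay `2r`-separated after `Λ`-periodisation. By Zorn's lemma enlarge them, by points of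
`Q(T) \ Q(S)`, to a maximal set `m` whose periodisation `ρ = m + Λ` is still `2r`-separated.
Maximality puts every point of `Q(T) \ Q(S)` within `2r ≤ R` of `ρ`, points of `Q(S)` are `R`-close
to `ω ∩ Q(S + R)`, and `Q(T)` is a fundamental domain of `Λ`; so `ρ` is an `(r,R)`-set, and it is
crystallographic being `Λ`-periodic. As `m ⊆ Q(T)` and `S < T`, no nonzero translate of `m`
meets `Q(S)`.
-/

open Set Metric

lemma vadd_add_addSubgroup {G : Type*} [AddCommGroup G] {H : AddSubgroup G} (s : Set G) {a : G}
    (ha : a ∈ H) : a +ᵥ (s + (H : Set G)) = s + H := by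
  rw [← add_vadd_comm, vadd_coe_set ha]

lemma insert_add_eq_image_union {G : Type*} [Add G] (p : G) (s t : Set G) :
    insert p s + t = (p + ·) '' t ∪ (s + t) := by
  rw [insert_eq, union_add, singleton_add]

section Packing

variable {E : Type*} [NormedAddCommGroup E] {Λ : AddSubgroup E} {δ : ℝ}

lemma pairwise_insert_add_addSubgroup (hΛ : ∀ l ∈ Λ, l ≠ 0 → δ ≤ ‖l‖) {m : Set E} {p : E}
    (hm : (m + (Λ : Set E)).Pairwise (δ ≤ dist · ·))
    (hp : ∀ q ∈ m + (Λ : Set E), δ ≤ dist p q) :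
    (insert p m + (Λ : Set E)).Pairwise (δ ≤ dist · ·) := by
  have hcross : ∀ l ∈ Λ, ∀ q ∈ m + (Λ : Set E), δ ≤ dist (p + l) q := fun l hl q hq => by
    have hq' : -l +ᵥ q ∈ m + (Λ : Set E) := by
      rw [← vadd_add_addSubgroup m (neg_mem hl)]
      exact vadd_mem_vadd_set hq
    calc δ ≤ dist p (-l +ᵥ q) := hp _ hq'
      _ = dist (p + l) q := by rw [vadd_eq_add, neg_add_eq_sub, dist_sub_eq_dist_add_right]
  rw [insert_add_eq_image_union, pairwise_union]
  refine ⟨?_, hm, ?_⟩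
  · rintro _ ⟨l, hl, rfl⟩ _ ⟨l', hl', rfl⟩ hne
    rw [dist_add_left, dist_eq_norm]
    exact hΛ _ (sub_mem hl hl') (sub_ne_zero.2 fun h => hne (h ▸ rfl))
  · rintro _ ⟨l, hl, rfl⟩ q hq -
    exact ⟨hcross l hl q hq, dist_comm q _ ▸ hcross l hl q hq⟩

theorem exists_periodic_packing (hδ : 0 < δ) (hΛ : ∀ l ∈ Λ, l ≠ 0 → δ ≤ ‖l‖) {A B : Set E}
    (hAB : A ⊆ B) (hA : (A + (Λ : Set E)).Pairwise (δ ≤ dist · ·)) :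
    ∃ m, A ⊆ m ∧ m ⊆ B ∧ (m + (Λ : Set E)).Pairwise (δ ≤ dist · ·) ∧
      ∀ p ∈ B, ∃ q ∈ m + (Λ : Set E), dist p q < δ := by
  set F := {σ : Set E | A ⊆ σ ∧ σ ⊆ B ∧ (σ + (Λ : Set E)).Pairwise (δ ≤ dist · ·)}
  have hchain : ∀ c ⊆ F, IsChain (· ⊆ ·) c → c.Nonempty → ∃ ub ∈ F, ∀ σ ∈ c, σ ⊆ ub := by
    rintro c hcF hc ⟨σ₀, hσ₀⟩
    have hdir : DirectedOn (· ⊆ ·) ((· + (Λ : Set E)) '' c) :=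
      (hc.image_of_map_rel _ _ _ fun _ _ h => add_subset_add_right h).directedOn
    refine ⟨⋃₀ c, ⟨(hcF hσ₀).1.trans (subset_sUnion_of_mem hσ₀),
      sUnion_subset fun σ hσ => (hcF hσ).2.1, ?_⟩, fun _ => subset_sUnion_of_mem⟩
    rw [sUnion_add, ← sUnion_image, pairwise_sUnion hdir]
    rintro _ ⟨σ, hσ, rfl⟩
    exact (hcF hσ).2.2
  obtain ⟨m, hAm, hmax⟩ := zorn_subset_nonempty F hchain A ⟨subset_rfl, hAB, hA⟩
  obtain ⟨-, hmB, hm⟩ := hmax.prop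
  refine ⟨m, hAm, hmB, hm, fun p hp => ?_⟩
  -- a point of `B` that is `δ`-far from `m + Λ` could be added to the maximal `m`
  by_contra! hfar
  have hpm : p ∈ m := hmax.mem_of_prop_insert
    ⟨hAm.trans (subset_insert p m), insert_subset hp hmB,
      pairwise_insert_add_addSubgroup hΛ hm hfar⟩
  have := hfar p (subset_add_left m (zero_mem Λ) hpm)
  rw [dist_self] at this
  linarith

end Packing

section CubeLattice

variable {d : ℕ}

/-- `(2Tℤ)^d`, the lattice whose translates of `Q(T)` tile `ℝ^d`. -/
def cubeLattice (d : ℕ) (T : ℝ) : AddSubgroup (EuclideanSpace ℝ (Fin d)) :=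
  (AddSubgroup.pi univ fun _ => AddSubgroup.zmultiples (2 * T)).comap
    (WithLp.linearEquiv 2 ℝ (Fin d → ℝ)).toLinearMap.toAddMonoidHom

lemma mem_cubeLattice {T : ℝ} {l : EuclideanSpace ℝ (Fin d)} :
    l ∈ cubeLattice d T ↔ ∀ i, ∃ k : ℤ, k • (2 * T) = l i := by
  simp [cubeLattice, AddSubgroup.mem_pi, AddSubgroup.mem_zmultiples_iff]

lemma exists_two_mul_abs_le_abs_apply_of_mem_cubeLattice {T : ℝ} {l : EuclideanSpace ℝ (Fin d)}
    (hl : l ∈ cubeLattice d T) (hl0 : l ≠ 0) : ∃ i, 2 * |T| ≤ |l i| := by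
  obtain ⟨i, hi⟩ : ∃ i, l i ≠ 0 := by
    by_contra! h
    exact hl0 (PiLp.ext h)
  obtain ⟨k, hk⟩ := mem_cubeLattice.1 hl i
  have hk0 : k ≠ 0 := by rintro rfl; simp [← hk] at hi
  refine ⟨i, ?_⟩
  rw [← hk, zsmul_eq_mul, abs_mul, abs_mul, abs_two]
  have : (1 : ℝ) ≤ |(k : ℝ)| := by exact_mod_cast Int.one_le_abs hk0
  nlinarith [abs_nonneg T]

lemma two_mul_abs_le_norm_of_mem_cubeLattice {T : ℝ} {l : EuclideanSpace ℝ (Fin d)}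
    (hl : l ∈ cubeLattice d T) (hl0 : l ≠ 0) : 2 * |T| ≤ ‖l‖ := by
  obtain ⟨i, hi⟩ := exists_two_mul_abs_le_abs_apply_of_mem_cubeLattice hl hl0
  exact hi.trans (PiLp.norm_apply_le l i)

lemma exists_sub_mem_cube {T : ℝ} (hT : 0 < T) (z : EuclideanSpace ℝ (Fin d)) :
    ∃ l ∈ cubeLattice d T, z - l ∈ cube d T := by
  have h2T : 0 < 2 * T := by positivity
  refine ⟨WithLp.toLp 2 fun i => toIcoDiv h2T (-T) (z i) • (2 * T),
    mem_cubeLattice.2 fun i => ⟨_, rfl⟩, fun i => ?_⟩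
  show z i - toIcoDiv h2T (-T) (z i) • (2 * T) ∈ Icc (-T) T
  obtain ⟨h1, h2⟩ := toIcoMod_mem_Ico h2T (-T) (z i)
  rw [← self_sub_toIcoDiv_zsmul] at h1 h2
  exact ⟨h1, by linarith⟩

lemma isCompact_cube (T : ℝ) : IsCompact (cube d T) := by
  have : cube d T = EuclideanSpace.equiv (Fin d) ℝ ⁻¹' univ.pi fun _ => Icc (-T) T := by
    ext x; simp only [cube, mem_preimage, mem_univ_pi]; rfl
  rw [this]
  exact (EuclideanSpace.equiv (Fin d) ℝ).toHomeomorph.isCompact_preimage.2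
    (isCompact_univ_pi fun _ => isCompact_Icc)

lemma cube_mono {S S' : ℝ} (h : S ≤ S') : cube d S ⊆ cube d S' := fun _ hx i =>
  Icc_subset_Icc (neg_le_neg h) h (hx i)

lemma abs_apply_sub_le_dist (x y : EuclideanSpace ℝ (Fin d)) (i : Fin d) :
    |x i - y i| ≤ dist x y :=
  PiLp.dist_apply_le x y i

lemma mem_cube_add_of_dist_le {S R : ℝ} {x y : EuclideanSpace ℝ (Fin d)} (hx : x ∈ cube d S)
    (hxy : dist x y ≤ R) : y ∈ cube d (S + R) := fun i => by
  have := abs_le.1 ((abs_apply_sub_le_dist x y i).trans hxy)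
  have := hx i
  constructor <;> linarith [this.1, this.2]

lemma pairwise_add_cubeLattice {s : Set (EuclideanSpace ℝ (Fin d))} {c T δ : ℝ}
    (hs : s ⊆ cube d c) (hsep : s.Pairwise (δ ≤ dist · ·)) (hcT : 2 * c + δ ≤ 2 * |T|) :
    (s + (cubeLattice d T : Set _)).Pairwise (δ ≤ dist · ·) := by
  rintro _ ⟨x, hx, l, hl, rfl⟩ _ ⟨y, hy, l', hl', rfl⟩ hne
  by_cases hll : l = l'
  · subst hll
    rw [dist_add_right]
    exact hsep hx hy fun h => hne (h ▸ rfl)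
  obtain ⟨i, hi⟩ :=
    exists_two_mul_abs_le_abs_apply_of_mem_cubeLattice (sub_mem hl hl') (sub_ne_zero.2 hll)
  have hxi := hs hx i
  have hyi := hs hy i
  have hxy : |x i - y i| ≤ 2 * c :=
    abs_le.2 ⟨by linarith [hxi.1, hyi.2], by linarith [hxi.2, hyi.1]⟩
  calc δ ≤ |l i - l' i| - |x i - y i| := by rw [← PiLp.sub_apply]; linarith
    _ ≤ |(x + l) i - (y + l') i| := by
      rw [PiLp.add_apply, PiLp.add_apply, add_sub_add_comm, add_comm]
      exact abs_sub_abs_le_abs_add _ _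
    _ ≤ dist (x + l) (y + l') := abs_apply_sub_le_dist _ _ i

lemma add_cubeLattice_inter_cube {s : Set (EuclideanSpace ℝ (Fin d))} {c S T : ℝ}
    (hs : s ⊆ cube d c) (hcS : c + S < 2 * |T|) :
    (s + (cubeLattice d T : Set _)) ∩ cube d S = s ∩ cube d S := by
  refine Subset.antisymm ?_ (inter_subset_inter_left _ (subset_add_left s (zero_mem _)))
  rintro _ ⟨⟨x, hx, l, hl, rfl⟩, hS⟩
  obtain rfl | hl0 := eq_or_ne l 0
  · simp only [add_zero] at hS ⊢
    exact ⟨hx, hS⟩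
  obtain ⟨i, hi⟩ := exists_two_mul_abs_le_abs_apply_of_mem_cubeLattice hl hl0
  have hxi := abs_le.2 (hs hx i)
  have hSi := abs_le.2 (hS i)
  rw [PiLp.add_apply] at hSi
  have := abs_sub_abs_le_abs_add (l i) (x i)
  rw [add_comm] at hSi
  linarith

lemma forall_exists_dist_le_of_cube {s : Set (EuclideanSpace ℝ (Fin d))} {T R : ℝ} (hT : 0 < T)
    (h : ∀ p ∈ cube d T, ∃ q ∈ s + (cubeLattice d T : Set _), dist p q ≤ R)
    (z : EuclideanSpace ℝ (Fin d)) : ∃ q ∈ s + (cubeLattice d T : Set _), dist z q ≤ R := by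
  obtain ⟨l, hl, hzl⟩ := exists_sub_mem_cube hT z
  obtain ⟨q, hq, hdist⟩ := h _ hzl
  refine ⟨l +ᵥ q, vadd_add_addSubgroup s hl ▸ vadd_mem_vadd_set hq, ?_⟩
  rwa [vadd_eq_add, add_comm, ← dist_sub_eq_dist_add_left]

end CubeLattice

section Crystallographic

variable {d : ℕ}

lemma isRRSet_iff {r R : ℝ} (hr : 0 < r) {ω : Set (EuclideanSpace ℝ (Fin d))} :
    IsRRSet r R ω ↔ ω.Pairwise (2 * r ≤ dist · ·) ∧ ∀ z, ∃ x ∈ ω, dist z x ≤ R := by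
  simp only [IsRRSet, disjoint_ball_ball_iff hr hr, ← two_mul, iUnion_eq_univ_iff, mem_iUnion,
    mem_closedBall, exists_prop]
  rfl

lemma discreteTopology_stabilizer {E : Type*} [NormedAddCommGroup E] {ρ : Set E} {δ : ℝ}
    (hδ : 0 < δ) (hρ : ρ.Pairwise (δ ≤ dist · ·)) (hne : ρ.Nonempty) :
    DiscreteTopology (AddAction.stabilizer E ρ) := by
  obtain ⟨q, hq⟩ := hne
  rw [discreteTopology_iff_isOpen_singleton_zero]
  convert (isOpen_ball (x := (0 : E)) (ε := δ)).preimage continuous_subtype_val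
  ext ⟨t, ht⟩
  simp only [mem_singleton_iff, mem_preimage, mem_ball, dist_zero_right, AddSubgroup.mk_eq_zero]
  refine ⟨fun h => h ▸ norm_zero.trans_lt hδ, fun hlt => ?_⟩
  by_contra ht0
  have htq : t + q ∈ ρ := AddAction.mem_stabilizer_iff.1 ht ▸ vadd_mem_vadd_set hq
  have : δ ≤ dist (t + q) q := hρ htq hq (by simpa using ht0)
  rw [dist_eq_norm, add_sub_cancel_right] at this
  linarith

lemma compactSpace_quotient_of_isCompact {G : Type*} [AddCommGroup G] [TopologicalSpace G]
    [IsTopologicalAddGroup G] {H : AddSubgroup G} {K : Set G} (hK : IsCompact K)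
    (hKH : ∀ z, ∃ t ∈ H, z - t ∈ K) : CompactSpace (G ⧸ H) := by
  refine ⟨?_⟩
  convert hK.image (QuotientAddGroup.continuous_mk (N := H))
  refine (eq_univ_of_forall fun y => ?_).symm
  induction y using QuotientAddGroup.induction_on with | H z => ?_
  obtain ⟨t, ht, hzt⟩ := hKH z
  exact ⟨z - t, hzt, QuotientAddGroup.eq.2 (by simpa using ht)⟩

lemma isCrystallographic_of_pairwise {ρ : Set (EuclideanSpace ℝ (Fin d))} {δ : ℝ}
    (hδ : 0 < δ) (hρ : ρ.Pairwise (δ ≤ dist · ·)) (hne : ρ.Nonempty)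
    {K : Set (EuclideanSpace ℝ (Fin d))} (hK : IsCompact K)
    (hKρ : ∀ z, ∃ t, t +ᵥ ρ = ρ ∧ z - t ∈ K) : IsCrystallographic ρ :=
  ⟨AddAction.stabilizer _ ρ, rfl, discreteTopology_stabilizer hδ hρ hne,
    compactSpace_quotient_of_isCompact hK hKρ⟩

end Crystallographic

theorem crystallographic_extension_general {d : ℕ} (r R : ℝ) (hr : 0 < r)
    (hrR : 2 * r ≤ R) (ω : Set (EuclideanSpace ℝ (Fin d))) (hω : IsRRSet r R ω)
    (S : ℝ) (hS : 0 < S) :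
    ∃ ρ : Set (EuclideanSpace ℝ (Fin d)), IsRRSet r R ρ ∧ IsCrystallographic ρ ∧
      ρ ∩ cube d S = ω ∩ cube d S := by
  obtain ⟨hωsep, hωcov⟩ := (isRRSet_iff hr).1 hω
  set T := S + R + r
  have hT : 0 < T := by linarith
  have hT_abs : |T| = T := abs_of_pos hT
  obtain ⟨m, hAm, hmB, hmsep, hmcov⟩ := exists_periodic_packing (by positivity)
    (A := ω ∩ cube d (S + R))
    (fun l hl hl0 => (two_mul_abs_le_norm_of_mem_cubeLattice hl hl0).trans' (by linarith))
    (subset_union_left (t := cube d T \ cube d S))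
    (pairwise_add_cubeLattice inter_subset_right (hωsep.mono inter_subset_left) (by linarith))
  have hmT : m ⊆ cube d T :=
    hmB.trans (union_subset (inter_subset_right.trans (cube_mono (by linarith))) sdiff_subset)
  have hcov := forall_exists_dist_le_of_cube hT fun p hp => by
    by_cases hpS : p ∈ cube d S
    · obtain ⟨x, hx, hpx⟩ := hωcov p
      exact ⟨x, subset_add_left m (zero_mem _) (hAm ⟨hx, mem_cube_add_of_dist_le hpS hpx⟩), hpx⟩
    · obtain ⟨q, hq, hpq⟩ := hmcov p (Or.inr ⟨hp, hpS⟩)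
      exact ⟨q, hq, by linarith⟩
  refine ⟨_, (isRRSet_iff hr).2 ⟨hmsep, hcov⟩, isCrystallographic_of_pairwise (by positivity)
    hmsep ((hcov 0).imp fun _ => And.left) (isCompact_cube T) fun z => ?_, ?_⟩
  · obtain ⟨l, hl, hzl⟩ := exists_sub_mem_cube hT z
    exact ⟨l, vadd_add_addSubgroup m hl, hzl⟩
  rw [add_cubeLattice_inter_cube hmT (by linarith)]
  refine Subset.antisymm (fun x ⟨hxm, hxS⟩ => ⟨?_, hxS⟩) fun x ⟨hxω, hxS⟩ =>
    ⟨hAm ⟨hxω, cube_mono (by linarith) hxS⟩, hxS⟩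
  rcases hmB hxm with h | h
  exacts [h.1, absurd hxS h.2]

/-- Any `(r,R)`-set (with `2r ≤ R`) can be extended outside a given cube to a
crystallographic `(r,R)`-set. -/
theorem crystallographic_extension {d : ℕ} (r R : ℝ) (hr : 0 < r) (hR : 0 < R)
    (hrR : 2 * r ≤ R) (ω : Set (EuclideanSpace ℝ (Fin d))) (hω : IsRRSet r R ω)
    (S : ℝ) (hS : 0 < S) :
    ∃ ρ : Set (EuclideanSpace ℝ (Fin d)), IsRRSet r R ρ ∧ IsCrystallographic ρ ∧
      ρ ∩ cube d S = ω ∩ cube d S :=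
  crystallographic_extension_general r R hr hrR ω hω S hS
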